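/- arXiv:math/0701692 — 9 statements merged into one kernel-verified Lean document; each statement's English description precedes it below -/
import Mathlib

section
/- Let F be a finite field. Then every Zorn vector matrix M over F with det M = 1 satisfies: either M or −M lies in the subloop generated by the set {u(α), l(α) : α ∈ F³, α ≠ 0}. (Equivalently, the simple Moufang loop M/Z(M) is generated by the images of all u(α) and l(α) with α ≠ 0.) -/
open Matrix

/-- A Zorn vector matrix over a field `F`: a 2×2 matrix with diagonal scalar
entries `a, b` and off-diagonal vector entries `α, β ∈ F³`. -/
structure Zorn (F : Type*) [Field F] where
  a : F
  α : Fin 3 → F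
  β : Fin 3 → F
  b : F

namespace Zorn

variable {F : Type*} [Field F]

/-- Zorn vector matrix multiplication. -/
def mul (M N : Zorn F) : Zorn F :=
  ⟨M.a * N.a + M.α ⬝ᵥ N.β,
   M.a • N.α + N.b • M.α - crossProduct M.β N.β,
   N.a • M.β + M.b • N.β + crossProduct M.α N.α,
   M.β ⬝ᵥ N.α + M.b * N.b⟩

/-- The determinant of a Zorn vector matrix. -/
def det (M : Zorn F) : F := M.a * M.b - M.α ⬝ᵥ M.β

/-- The identity Zorn vector matrix. -/
def one : Zorn F := ⟨1, 0, 0, 1⟩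

/-- Negation of a Zorn vector matrix. -/
def neg (M : Zorn F) : Zorn F := ⟨-M.a, -M.α, -M.β, -M.b⟩

/-- The inverse map `(a, α, β, b) ↦ (b, −α, −β, a)`. -/
def inv (M : Zorn F) : Zorn F := ⟨M.b, -M.α, -M.β, M.a⟩

/-- The transpose of a Zorn vector matrix. -/
def transpose (M : Zorn F) : Zorn F := ⟨M.a, M.β, M.α, M.b⟩

/-- `u(α) = (1, α, 0, 1)`. -/
def u (α : Fin 3 → F) : Zorn F := ⟨1, α, 0, 1⟩

/-- `l(α) = (1, 0, α, 1)`. -/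
def l (α : Fin 3 → F) : Zorn F := ⟨1, 0, α, 1⟩

open Classical in
/-- `t(α)`: for nonzero `α`, a vector with `α ⬝ᵥ t α = -1` supported at the
first nonzero coordinate of `α`. -/
noncomputable def t (α : Fin 3 → F) : Fin 3 → F :=
  if α 0 ≠ 0 then ![-(α 0)⁻¹, 0, 0]
  else if α 1 ≠ 0 then ![0, -(α 1)⁻¹, 0]
  else ![0, 0, -(α 2)⁻¹]

/-- `s(α) = (0, α, t(α), 0)`. -/
noncomputable def s (α : Fin 3 → F) : Zorn F := ⟨0, α, t α, 0⟩

/-- The subloop generated by a set `S` of Zorn vector matrices: the smallest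
set containing `S` and the identity, closed under multiplication and the
inverse map. -/
inductive InSubloop (S : Set (Zorn F)) : Zorn F → Prop
  | mem : ∀ M ∈ S, InSubloop S M
  | one : InSubloop S one
  | mul : ∀ M N, InSubloop S M → InSubloop S N → InSubloop S (M.mul N)
  | inv : ∀ M, InSubloop S M → InSubloop S M.inv

end Zorn

/-- The first standard basis vector of `F³`. -/
def e1 {F : Type*} [Field F] : Fin 3 → F := ![1, 0, 0]
/-- The second standard basis vector of `F³`. -/
def e2 {F : Type*} [Field F] : Fin 3 → F := ![0, 1, 0]
/-- The third standard basis vector of `F³`. -/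
def e3 {F : Type*} [Field F] : Fin 3 → F := ![0, 0, 1]

/-- `α ∈ F³` has first nonzero coordinate equal to `1`. -/
def FirstNonzeroOne {F : Type*} [Field F] (α : Fin 3 → F) : Prop :=
  α 0 = 1 ∨ (α 0 = 0 ∧ α 1 = 1) ∨ (α 0 = 0 ∧ α 1 = 0 ∧ α 2 = 1)


namespace ZornAux

open Zorn

variable {F : Type*} [Field F]

/-- The generating set. -/
def S (F : Type*) [Field F] : Set (Zorn F) :=
  {N : Zorn F | ∃ α : Fin 3 → F, α ≠ 0 ∧ (N = Zorn.u α ∨ N = Zorn.l α)}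

lemma cross0 (x y : Fin 3 → F) : crossProduct x y 0 = x 1 * y 2 - x 2 * y 1 := by
  simp [cross_apply]
lemma cross1 (x y : Fin 3 → F) : crossProduct x y 1 = x 2 * y 0 - x 0 * y 2 := by
  simp [cross_apply]
lemma cross2 (x y : Fin 3 → F) : crossProduct x y 2 = x 0 * y 1 - x 1 * y 0 := by
  simp [cross_apply]

lemma ext' {M N : Zorn F} (h1 : M.a = N.a) (h2 : M.α = N.α) (h3 : M.β = N.β)
    (h4 : M.b = N.b) : M = N := by
  cases M; cases N; simp_all

lemma cancel_u (γ : Fin 3 → F) (M : Zorn F) : (u (-γ)).mul ((u γ).mul M) = M := by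
  obtain ⟨a, α, β, b⟩ := M
  refine ext' ?_ (funext fun i => ?_) (funext fun i => ?_) ?_
  · simp [Zorn.mul, u, dotProduct, Fin.sum_univ_three, cross0, cross1, cross2]; try ring
  · fin_cases i <;> (simp [Zorn.mul, u, dotProduct, Fin.sum_univ_three, cross0, cross1, cross2]; try ring)
  · fin_cases i <;> (simp [Zorn.mul, u, dotProduct, Fin.sum_univ_three, cross0, cross1, cross2]; try ring)
  · simp [Zorn.mul, u, dotProduct, Fin.sum_univ_three, cross0, cross1, cross2]; try ring

lemma cancel_l (γ : Fin 3 → F) (M : Zorn F) : (l (-γ)).mul ((l γ).mul M) = M := by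
  obtain ⟨a, α, β, b⟩ := M
  refine ext' ?_ (funext fun i => ?_) (funext fun i => ?_) ?_
  · simp [Zorn.mul, l, dotProduct, Fin.sum_univ_three, cross0, cross1, cross2]; try ring
  · fin_cases i <;> (simp [Zorn.mul, l, dotProduct, Fin.sum_univ_three, cross0, cross1, cross2]; try ring)
  · fin_cases i <;> (simp [Zorn.mul, l, dotProduct, Fin.sum_univ_three, cross0, cross1, cross2]; try ring)
  · simp [Zorn.mul, l, dotProduct, Fin.sum_univ_three, cross0, cross1, cross2]; try ring

lemma det_mul' (M N : Zorn F) : (M.mul N).det = M.det * N.det := by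
  obtain ⟨a, α, β, b⟩ := M; obtain ⟨c, γ, δ, d⟩ := N
  simp [Zorn.mul, Zorn.det, dotProduct, Fin.sum_univ_three, cross0, cross1, cross2]
  ring

lemma u_mem {γ : Fin 3 → F} (hγ : γ ≠ 0) : InSubloop (S F) (u γ) :=
  InSubloop.mem _ ⟨γ, hγ, Or.inl rfl⟩

lemma l_mem {γ : Fin 3 → F} (hγ : γ ≠ 0) : InSubloop (S F) (l γ) :=
  InSubloop.mem _ ⟨γ, hγ, Or.inr rfl⟩

lemma red_u {M : Zorn F} {γ : Fin 3 → F} (hγ : γ ≠ 0)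
    (h : InSubloop (S F) ((u γ).mul M)) : InSubloop (S F) M := by
  have := InSubloop.mul _ _ (u_mem (neg_ne_zero.mpr hγ)) h
  rwa [cancel_u] at this

lemma red_l {M : Zorn F} {γ : Fin 3 → F} (hγ : γ ≠ 0)
    (h : InSubloop (S F) ((l γ).mul M)) : InSubloop (S F) M := by
  have := InSubloop.mul _ _ (l_mem (neg_ne_zero.mpr hγ)) h
  rwa [cancel_l] at this

lemma stepA {M : Zorn F} (hdet : M.det = 1) (ha : M.a = 1) (hβ : M.β = 0) :
    InSubloop (S F) M := by
  have hb : M.b = 1 := by simpa [Zorn.det, ha, hβ] using hdet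
  by_cases hα : M.α = 0
  · have : M = Zorn.one := ext' ha hα hβ hb
    exact this ▸ InSubloop.one
  · have : M = u M.α := ext' ha rfl hβ hb
    exact this ▸ u_mem hα

lemma stepB {M : Zorn F} (hdet : M.det = 1) (ha : M.a = 1) : InSubloop (S F) M := by
  by_cases hβ : M.β = 0
  · exact stepA hdet ha hβ
  · refine red_l (γ := -M.β) (neg_ne_zero.mpr hβ) (stepA ?_ ?_ ?_)
    · rw [det_mul', hdet]
      simp [Zorn.det, l]
    · simp [Zorn.mul, l, ha]
    · funext i
      fin_cases i <;>
        (simp [Zorn.mul, l, ha, cross0, cross1, cross2]; try ring)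

lemma stepC {M : Zorn F} (hdet : M.det = 1) (ha : M.a ≠ 1) (hβ : M.β ≠ 0) :
    InSubloop (S F) M := by
  obtain ⟨i, hi⟩ := Function.ne_iff.mp hβ
  simp only [Pi.zero_apply] at hi
  have ha' : 1 - M.a ≠ 0 := sub_ne_zero.mpr (Ne.symm ha)
  set γ : Fin 3 → F := ((1 - M.a) * (M.β i)⁻¹) • (Pi.single i 1 : Fin 3 → F) with hγdef
  have hγi : γ i = (1 - M.a) * (M.β i)⁻¹ := by simp [hγdef]
  have hγ : γ ≠ 0 := by
    intro h
    have h2 := congrFun h i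
    rw [hγi] at h2
    simp only [Pi.zero_apply, mul_eq_zero, inv_eq_zero] at h2
    tauto
  have hdot : γ ⬝ᵥ M.β = 1 - M.a := by
    have hterm : ∀ j, γ j * M.β j
        = if j = i then (1 - M.a) * (M.β i)⁻¹ * M.β i else 0 := by
      intro j
      by_cases hji : j = i <;> simp [hγdef, Pi.single_apply, hji]
    simp only [dotProduct, hterm, Finset.sum_ite_eq' Finset.univ i, Finset.mem_univ,
      if_true]
    field_simp
  refine red_u (γ := γ) hγ (stepB ?_ ?_)
  · rw [det_mul', hdet]
    simp [Zorn.det, u]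
  · have h3 : ((u γ).mul M).a = M.a + γ ⬝ᵥ M.β := by simp [Zorn.mul, u]
    rw [h3, hdot]
    ring

lemma stepD {M : Zorn F} (hdet : M.det = 1) (hβ : M.β ≠ 0) : InSubloop (S F) M := by
  by_cases ha : M.a = 1
  · exact stepB hdet ha
  · exact stepC hdet ha hβ

lemma main {M : Zorn F} (hdet : M.det = 1) : InSubloop (S F) M := by
  by_cases ha : M.a = 1
  · exact stepB hdet ha
  by_cases hβ : M.β = 0
  · -- det = a*b = 1, so a ≠ 0; multiply by l(e1) to create a nonzero β
    have ha0 : M.a ≠ 0 := by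
      intro h
      rw [Zorn.det, h, hβ] at hdet
      simp at hdet
    have he1 : (e1 : Fin 3 → F) ≠ 0 := by
      intro h
      have := congrFun h 0
      simp [e1] at this
    refine red_l (γ := e1) he1 (stepD ?_ ?_)
    · rw [det_mul', hdet]
      simp [Zorn.det, l]
    · intro h
      have := congrFun h 0
      simp [Zorn.mul, l, e1, hβ, cross0] at this
      exact ha0 this
  · exact stepD hdet hβ

end ZornAux

/-- Paige's generation result: the simple Moufang loop over a finite field is
generated by all `u(α)` and `l(α)` with `α ≠ 0`. -/
theorem generated_by_u_l (F : Type*) [Field F] [Fintype F] (M : Zorn F)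
    (hM : M.det = 1) :
    Zorn.InSubloop {N : Zorn F | ∃ α : Fin 3 → F, α ≠ 0 ∧ (N = Zorn.u α ∨ N = Zorn.l α)} M ∨
    Zorn.InSubloop {N : Zorn F | ∃ α : Fin 3 → F, α ≠ 0 ∧ (N = Zorn.u α ∨ N = Zorn.l α)} M.neg := by
  exact Or.inl (ZornAux.main hM)
end

section
/- Let p be a prime and F = ZMod p. Then every Zorn vector matrix M over F with det M = 1 satisfies: either M or −M lies in the subloop generated by the six elements {u(eᵢ), s(eᵢ) : 1 ≤ i ≤ 3}. -/
open Matrix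

section Aux

namespace Zorn

variable {F : Type*} [Field F]

/-- Build a Zorn matrix from eight scalars. -/
def mk8 (a x1 x2 x3 y1 y2 y3 b : F) : Zorn F :=
  ⟨a, ![x1, x2, x3], ![y1, y2, y3], b⟩

lemma ext' {M N : Zorn F} (h1 : M.a = N.a) (h2 : ∀ i, M.α i = N.α i)
    (h3 : ∀ i, M.β i = N.β i) (h4 : M.b = N.b) : M = N := by
  cases M; cases N; simp only [mk.injEq]
  exact ⟨h1, funext h2, funext h3, h4⟩

lemma mk8_congr {a x1 x2 x3 y1 y2 y3 b a' x1' x2' x3' y1' y2' y3' b' : F}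
    (h1 : a = a') (h2 : x1 = x1') (h3 : x2 = x2') (h4 : x3 = x3')
    (h5 : y1 = y1') (h6 : y2 = y2') (h7 : y3 = y3') (h8 : b = b') :
    mk8 a x1 x2 x3 y1 y2 y3 b = mk8 a' x1' x2' x3' y1' y2' y3' b' := by
  subst h1 h2 h3 h4 h5 h6 h7 h8; rfl

lemma eta8 (M : Zorn F) :
    M = mk8 M.a (M.α 0) (M.α 1) (M.α 2) (M.β 0) (M.β 1) (M.β 2) M.b := by
  refine ext' rfl (fun i => ?_) (fun i => ?_) rfl <;> fin_cases i <;> simp [mk8]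

lemma mul_mk8 (a x1 x2 x3 y1 y2 y3 b c z1 z2 z3 w1 w2 w3 d : F) :
    (mk8 a x1 x2 x3 y1 y2 y3 b).mul (mk8 c z1 z2 z3 w1 w2 w3 d) =
    mk8 (a * c + (x1 * w1 + x2 * w2 + x3 * w3))
      (a * z1 + d * x1 - (y2 * w3 - y3 * w2))
      (a * z2 + d * x2 - (y3 * w1 - y1 * w3))
      (a * z3 + d * x3 - (y1 * w2 - y2 * w1))
      (c * y1 + b * w1 + (x2 * z3 - x3 * z2))
      (c * y2 + b * w2 + (x3 * z1 - x1 * z3))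
      (c * y3 + b * w3 + (x1 * z2 - x2 * z1))
      ((y1 * z1 + y2 * z2 + y3 * z3) + b * d) := by
  apply ext' ?_ ?_ ?_ ?_ <;> try intro i
  any_goals fin_cases i
  all_goals
    simp [mk8, mul, dotProduct, Fin.sum_univ_three, cross_apply]

lemma inv_mk8 (a x1 x2 x3 y1 y2 y3 b : F) :
    (mk8 a x1 x2 x3 y1 y2 y3 b).inv =
    mk8 b (-x1) (-x2) (-x3) (-y1) (-y2) (-y3) a := by
  apply ext' ?_ ?_ ?_ ?_ <;> try intro i
  any_goals fin_cases i
  all_goals simp [mk8, inv]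

lemma det_mk8 (a x1 x2 x3 y1 y2 y3 b : F) :
    (mk8 a x1 x2 x3 y1 y2 y3 b).det =
      a * b - (x1 * y1 + x2 * y2 + x3 * y3) := by
  simp [mk8, det, dotProduct, Fin.sum_univ_three]

lemma det_eta (M : Zorn F) :
    M.det = M.a * M.b - (M.α 0 * M.β 0 + M.α 1 * M.β 1 + M.α 2 * M.β 2) := by
  simp [det, dotProduct, Fin.sum_univ_three]

lemma one_mk8 : (one : Zorn F) = mk8 1 0 0 0 0 0 0 1 := by
  apply ext' ?_ ?_ ?_ ?_ <;> try intro i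
  any_goals fin_cases i
  all_goals simp [mk8, one]

lemma left_cancel (X N : Zorn F) (h : X.det = 1) : X.inv.mul (X.mul N) = N := by
  have h' : X.a * X.b - (X.α 0 * X.β 0 + X.α 1 * X.β 1 + X.α 2 * X.β 2) = 1 := by
    rw [← det_eta]; exact h
  rw [eta8 X, eta8 N, inv_mk8, mul_mk8, mul_mk8]
  apply mk8_congr
  · linear_combination N.a * h'
  · linear_combination N.α 0 * h'
  · linear_combination N.α 1 * h'
  · linear_combination N.α 2 * h'
  · linear_combination N.β 0 * h'
  · linear_combination N.β 1 * h'
  · linear_combination N.β 2 * h'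
  · linear_combination N.b * h'

lemma right_cancel (X N : Zorn F) (h : X.det = 1) : (N.mul X).mul X.inv = N := by
  have h' : X.a * X.b - (X.α 0 * X.β 0 + X.α 1 * X.β 1 + X.α 2 * X.β 2) = 1 := by
    rw [← det_eta]; exact h
  rw [eta8 X, eta8 N, inv_mk8, mul_mk8, mul_mk8]
  apply mk8_congr
  · linear_combination N.a * h'
  · linear_combination N.α 0 * h'
  · linear_combination N.α 1 * h'
  · linear_combination N.α 2 * h'
  · linear_combination N.β 0 * h'
  · linear_combination N.β 1 * h'
  · linear_combination N.β 2 * h'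
  · linear_combination N.b * h'

end Zorn

end Aux

section Gen

open Zorn

variable {F : Type*} [Field F]

lemma ue1_mk8 : (Zorn.u (e1 (F := F))) = mk8 1 1 0 0 0 0 0 1 := by
  apply Zorn.ext' ?_ ?_ ?_ ?_ <;> try intro i
  any_goals fin_cases i
  all_goals simp [Zorn.u, mk8, e1]

lemma ue2_mk8 : (Zorn.u (e2 (F := F))) = mk8 1 0 1 0 0 0 0 1 := by
  apply Zorn.ext' ?_ ?_ ?_ ?_ <;> try intro i
  any_goals fin_cases i
  all_goals simp [Zorn.u, mk8, e2]

lemma ue3_mk8 : (Zorn.u (e3 (F := F))) = mk8 1 0 0 1 0 0 0 1 := by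
  apply Zorn.ext' ?_ ?_ ?_ ?_ <;> try intro i
  any_goals fin_cases i
  all_goals simp [Zorn.u, mk8, e3]

lemma se1_mk8 : (Zorn.s (e1 (F := F))) = mk8 0 1 0 0 (-1) 0 0 0 := by
  apply Zorn.ext' ?_ ?_ ?_ ?_ <;> try intro i
  any_goals fin_cases i
  all_goals simp [Zorn.s, Zorn.t, mk8, e1]

lemma se2_mk8 : (Zorn.s (e2 (F := F))) = mk8 0 0 1 0 0 (-1) 0 0 := by
  apply Zorn.ext' ?_ ?_ ?_ ?_ <;> try intro i
  any_goals fin_cases i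
  all_goals simp [Zorn.s, Zorn.t, mk8, e2]

lemma se3_mk8 : (Zorn.s (e3 (F := F))) = mk8 0 0 0 1 0 0 (-1) 0 := by
  apply Zorn.ext' ?_ ?_ ?_ ?_ <;> try intro i
  any_goals fin_cases i
  all_goals simp [Zorn.s, Zorn.t, mk8, e3]

/-- The generating set. -/
def gset (F : Type*) [Field F] : Set (Zorn F) :=
  {Zorn.u e1, Zorn.u e2, Zorn.u e3, Zorn.s e1, Zorn.s e2, Zorn.s e3}

local notation "In" => Zorn.InSubloop (gset F)

lemma g_ue1 : In (mk8 1 1 0 0 0 0 0 1) := by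
  have := Zorn.InSubloop.mem (S := gset F) (Zorn.u e1) (by simp [gset])
  rwa [ue1_mk8] at this

lemma g_ue2 : In (mk8 1 0 1 0 0 0 0 1) := by
  have := Zorn.InSubloop.mem (S := gset F) (Zorn.u e2) (by simp [gset])
  rwa [ue2_mk8] at this

lemma g_ue3 : In (mk8 1 0 0 1 0 0 0 1) := by
  have := Zorn.InSubloop.mem (S := gset F) (Zorn.u e3) (by simp [gset])
  rwa [ue3_mk8] at this

lemma g_se1 : In (mk8 0 1 0 0 (-1) 0 0 0) := by
  have := Zorn.InSubloop.mem (S := gset F) (Zorn.s e1) (by simp [gset])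
  rwa [se1_mk8] at this

lemma g_se2 : In (mk8 0 0 1 0 0 (-1) 0 0) := by
  have := Zorn.InSubloop.mem (S := gset F) (Zorn.s e2) (by simp [gset])
  rwa [se2_mk8] at this

lemma g_se3 : In (mk8 0 0 0 1 0 0 (-1) 0) := by
  have := Zorn.InSubloop.mem (S := gset F) (Zorn.s e3) (by simp [gset])
  rwa [se3_mk8] at this

end Gen

section Chain

open Zorn

variable {p : ℕ} [Fact p.Prime]

local notation "In" => Zorn.InSubloop (gset (ZMod p))

lemma zrn_pow_mem {v1 v2 v3 : ZMod p}
    (hv : In (mk8 1 v1 v2 v3 0 0 0 1)) (c : ZMod p) :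
    In (mk8 1 (c * v1) (c * v2) (c * v3) 0 0 0 1) := by
  haveI : NeZero p := ⟨(Fact.out : p.Prime).ne_zero⟩
  have step : ∀ d : ZMod p,
      (mk8 1 (d * v1) (d * v2) (d * v3) 0 0 0 1).mul (mk8 1 v1 v2 v3 0 0 0 1) =
      mk8 1 ((d + 1) * v1) ((d + 1) * v2) ((d + 1) * v3) 0 0 0 1 := by
    intro d; rw [mul_mk8]; apply mk8_congr <;> ring
  have hn : ∀ n : ℕ,
      In (mk8 1 ((n : ZMod p) * v1) ((n : ZMod p) * v2) ((n : ZMod p) * v3) 0 0 0 1) := by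
    intro n
    induction n with
    | zero => simp only [Nat.cast_zero, zero_mul]; rw [← one_mk8]; exact Zorn.InSubloop.one
    | succ n ih =>
        have h := Zorn.InSubloop.mul _ _ ih hv
        rw [step] at h
        have hc : ((n + 1 : ℕ) : ZMod p) = (n : ZMod p) + 1 := by push_cast; ring
        rw [hc]
        exact h
  have h := hn c.val
  rwa [show ((c.val : ℕ) : ZMod p) = c from ZMod.natCast_rightInverse c] at h

lemma mem_u1 (c : ZMod p) : In (mk8 1 c 0 0 0 0 0 1) := by
  simpa using zrn_pow_mem g_ue1 c

lemma mem_u2 (c : ZMod p) : In (mk8 1 0 c 0 0 0 0 1) := by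
  simpa using zrn_pow_mem g_ue2 c

lemma mem_u3 (c : ZMod p) : In (mk8 1 0 0 c 0 0 0 1) := by
  simpa using zrn_pow_mem g_ue3 c

lemma mem_l1 (c : ZMod p) : In (mk8 1 0 0 0 c 0 0 1) := by
  have key : ((mk8 (0:ZMod p) 1 0 0 (-1) 0 0 0).inv).mul
      ((mk8 1 (-c) 0 0 0 0 0 1).mul (mk8 0 1 0 0 (-1) 0 0 0)) = mk8 1 0 0 0 c 0 0 1 := by
    rw [inv_mk8, mul_mk8, mul_mk8]; apply mk8_congr <;> ring
  have h := Zorn.InSubloop.mul _ _ (Zorn.InSubloop.inv _ g_se1)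
    (Zorn.InSubloop.mul _ _ (mem_u1 (-c)) g_se1)
  rwa [key] at h

lemma mem_l2 (c : ZMod p) : In (mk8 1 0 0 0 0 c 0 1) := by
  have key : ((mk8 (0:ZMod p) 0 1 0 0 (-1) 0 0).inv).mul
      ((mk8 1 0 (-c) 0 0 0 0 1).mul (mk8 0 0 1 0 0 (-1) 0 0)) = mk8 1 0 0 0 0 c 0 1 := by
    rw [inv_mk8, mul_mk8, mul_mk8]; apply mk8_congr <;> ring
  have h := Zorn.InSubloop.mul _ _ (Zorn.InSubloop.inv _ g_se2)
    (Zorn.InSubloop.mul _ _ (mem_u2 (-c)) g_se2)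
  rwa [key] at h

lemma mem_l3 (c : ZMod p) : In (mk8 1 0 0 0 0 0 c 1) := by
  have key : ((mk8 (0:ZMod p) 0 0 1 0 0 (-1) 0).inv).mul
      ((mk8 1 0 0 (-c) 0 0 0 1).mul (mk8 0 0 0 1 0 0 (-1) 0)) = mk8 1 0 0 0 0 0 c 1 := by
    rw [inv_mk8, mul_mk8, mul_mk8]; apply mk8_congr <;> ring
  have h := Zorn.InSubloop.mul _ _ (Zorn.InSubloop.inv _ g_se3)
    (Zorn.InSubloop.mul _ _ (mem_u3 (-c)) g_se3)
  rwa [key] at h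

lemma mem_u_pair (x y : ZMod p) : In (mk8 1 x y 0 0 0 0 1) := by
  have key : ((mk8 (1:ZMod p) 0 0 0 0 0 (x*y) 1).inv).mul
      ((mk8 1 x 0 0 0 0 0 1).mul (mk8 1 0 y 0 0 0 0 1)) = mk8 1 x y 0 0 0 0 1 := by
    rw [inv_mk8, mul_mk8, mul_mk8]; apply mk8_congr <;> ring
  have h := Zorn.InSubloop.mul _ _ (Zorn.InSubloop.inv _ (mem_l3 (x*y)))
    (Zorn.InSubloop.mul _ _ (mem_u1 x) (mem_u2 y))
  rwa [key] at h

lemma mem_l_pair (x y : ZMod p) : In (mk8 1 0 0 0 x y 0 1) := by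
  have key : ((mk8 (1:ZMod p) 0 0 (-(x*y)) 0 0 0 1).inv).mul
      ((mk8 1 0 0 0 x 0 0 1).mul (mk8 1 0 0 0 0 y 0 1)) = mk8 1 0 0 0 x y 0 1 := by
    rw [inv_mk8, mul_mk8, mul_mk8]; apply mk8_congr <;> ring
  have h := Zorn.InSubloop.mul _ _ (Zorn.InSubloop.inv _ (mem_u3 (-(x*y))))
    (Zorn.InSubloop.mul _ _ (mem_l1 x) (mem_l2 y))
  rwa [key] at h

lemma mem_u_all (x y z : ZMod p) : In (mk8 1 x y z 0 0 0 1) := by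
  have key : ((mk8 (1:ZMod p) 0 0 0 (y*z) (-(x*z)) 0 1).inv).mul
      ((mk8 1 x y 0 0 0 0 1).mul (mk8 1 0 0 z 0 0 0 1)) = mk8 1 x y z 0 0 0 1 := by
    rw [inv_mk8, mul_mk8, mul_mk8]; apply mk8_congr <;> ring
  have h := Zorn.InSubloop.mul _ _ (Zorn.InSubloop.inv _ (mem_l_pair (y*z) (-(x*z))))
    (Zorn.InSubloop.mul _ _ (mem_u_pair x y) (mem_u3 z))
  rwa [key] at h

lemma mem_l_all (x y z : ZMod p) : In (mk8 1 0 0 0 x y z 1) := by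
  have key : ((mk8 (1:ZMod p) (-(y*z)) (x*z) 0 0 0 0 1).inv).mul
      ((mk8 1 0 0 0 x y 0 1).mul (mk8 1 0 0 0 0 0 z 1)) = mk8 1 0 0 0 x y z 1 := by
    rw [inv_mk8, mul_mk8, mul_mk8]; apply mk8_congr <;> ring
  have h := Zorn.InSubloop.mul _ _ (Zorn.InSubloop.inv _ (mem_u_pair (-(y*z)) (x*z)))
    (Zorn.InSubloop.mul _ _ (mem_l_pair x y) (mem_l3 z))
  rwa [key] at h

lemma mem_D (a : ZMod p) (ha : a ≠ 0) : In (mk8 a 0 0 0 0 0 0 a⁻¹) := by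
  have key : ((mk8 (1:ZMod p) a 0 0 0 0 0 1).mul
      ((mk8 1 0 0 0 (-a⁻¹) 0 0 1).mul (mk8 1 a 0 0 0 0 0 1))).mul
      ((mk8 0 1 0 0 (-1) 0 0 0).inv) = mk8 a 0 0 0 0 0 0 a⁻¹ := by
    rw [inv_mk8, mul_mk8, mul_mk8, mul_mk8]
    apply mk8_congr <;> field_simp <;> ring
  have h := Zorn.InSubloop.mul _ _
    (Zorn.InSubloop.mul _ _ (mem_u1 a)
      (Zorn.InSubloop.mul _ _ (mem_l1 (-a⁻¹)) (mem_u1 a)))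
    (Zorn.InSubloop.inv _ g_se1)
  rwa [key] at h

lemma stage1 (a x1 x2 x3 y1 y2 y3 b j : ZMod p) (hj : a * j = 1) :
    (mk8 a x1 x2 x3 y1 y2 y3 b).mul
      (mk8 1 (-(j * x1)) (-(j * x2)) (-(j * x3)) 0 0 0 1) =
    mk8 a 0 0 0 y1 y2 y3 (b - j * (x1 * y1 + x2 * y2 + x3 * y3)) := by
  rw [mul_mk8]
  apply mk8_congr
  · ring
  · linear_combination (-x1) * hj
  · linear_combination (-x2) * hj
  · linear_combination (-x3) * hj
  · ring
  · ring
  · ring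
  · ring

lemma stage2 (a y1 y2 y3 b' j : ZMod p) (hj : a * j = 1) :
    (mk8 1 0 0 0 (-(j * y1)) (-(j * y2)) (-(j * y3)) 1).mul
      (mk8 a 0 0 0 y1 y2 y3 b') = mk8 a 0 0 0 0 0 0 b' := by
  rw [mul_mk8]
  apply mk8_congr
  · ring
  · ring
  · ring
  · ring
  · linear_combination (-y1) * hj
  · linear_combination (-y2) * hj
  · linear_combination (-y3) * hj
  · ring

lemma main8 (a x1 x2 x3 y1 y2 y3 b : ZMod p)
    (hdet : a * b - (x1 * y1 + x2 * y2 + x3 * y3) = 1) (ha : a ≠ 0) :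
    In (mk8 a x1 x2 x3 y1 y2 y3 b) := by
  have hj : a * a⁻¹ = 1 := mul_inv_cancel₀ ha
  have hXdet : (mk8 (1:ZMod p) 0 0 0 (-(a⁻¹ * y1)) (-(a⁻¹ * y2)) (-(a⁻¹ * y3)) 1).det = 1 := by
    rw [det_mk8]; ring
  have hYdet : (mk8 (1:ZMod p) (-(a⁻¹ * x1)) (-(a⁻¹ * x2)) (-(a⁻¹ * x3)) 0 0 0 1).det = 1 := by
    rw [det_mk8]; ring
  have h3 : b - a⁻¹ * (x1 * y1 + x2 * y2 + x3 * y3) = a⁻¹ := by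
    linear_combination (-b) * hj + a⁻¹ * hdet
  have hE : (mk8 (1:ZMod p) 0 0 0 (-(a⁻¹ * y1)) (-(a⁻¹ * y2)) (-(a⁻¹ * y3)) 1).mul
      ((mk8 a x1 x2 x3 y1 y2 y3 b).mul
        (mk8 1 (-(a⁻¹ * x1)) (-(a⁻¹ * x2)) (-(a⁻¹ * x3)) 0 0 0 1)) =
      mk8 a 0 0 0 0 0 0 a⁻¹ := by
    rw [stage1 a x1 x2 x3 y1 y2 y3 b a⁻¹ hj, stage2 a y1 y2 y3 _ a⁻¹ hj, h3]
  have h1 : (mk8 a x1 x2 x3 y1 y2 y3 b).mul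
      (mk8 1 (-(a⁻¹ * x1)) (-(a⁻¹ * x2)) (-(a⁻¹ * x3)) 0 0 0 1) =
      (mk8 (1:ZMod p) 0 0 0 (-(a⁻¹ * y1)) (-(a⁻¹ * y2)) (-(a⁻¹ * y3)) 1).inv.mul
        (mk8 a 0 0 0 0 0 0 a⁻¹) := by
    rw [← hE, left_cancel _ _ hXdet]
  have h2 : mk8 a x1 x2 x3 y1 y2 y3 b =
      ((mk8 (1:ZMod p) 0 0 0 (-(a⁻¹ * y1)) (-(a⁻¹ * y2)) (-(a⁻¹ * y3)) 1).inv.mul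
        (mk8 a 0 0 0 0 0 0 a⁻¹)).mul
        (mk8 (1:ZMod p) (-(a⁻¹ * x1)) (-(a⁻¹ * x2)) (-(a⁻¹ * x3)) 0 0 0 1).inv := by
    rw [← h1, right_cancel _ _ hYdet]
  rw [h2]
  exact Zorn.InSubloop.mul _ _
    (Zorn.InSubloop.mul _ _
      (Zorn.InSubloop.inv _ (mem_l_all _ _ _)) (mem_D a ha))
    (Zorn.InSubloop.inv _ (mem_u_all _ _ _))

lemma shift_mem (U M : Zorn (ZMod p)) (hU : U.det = 1) (hUm : In U)
    (h : In (U.mul M)) : In M := by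
  have hc := left_cancel U M hU
  rw [← hc]
  exact Zorn.InSubloop.mul _ _ (Zorn.InSubloop.inv _ hUm) h

lemma mem_main (M : Zorn (ZMod p)) (hM : M.det = 1) : In M := by
  have hdet : M.a * M.b - (M.α 0 * M.β 0 + M.α 1 * M.β 1 + M.α 2 * M.β 2) = 1 := by
    rw [← det_eta]; exact hM
  rw [eta8 M]
  by_cases ha : M.a = 0
  · have hy : M.β 0 ≠ 0 ∨ M.β 1 ≠ 0 ∨ M.β 2 ≠ 0 := by
      by_contra hc
      push_neg at hc
      obtain ⟨h1, h2, h3⟩ := hc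
      rw [ha, h1, h2, h3] at hdet
      simp at hdet
    rcases hy with hy | hy | hy
    · apply shift_mem (mk8 1 1 0 0 0 0 0 1) _ (by rw [det_mk8]; ring) g_ue1
      rw [mul_mk8]
      exact main8 _ _ _ _ _ _ _ _ (by linear_combination hdet) (by simpa [ha] using hy)
    · apply shift_mem (mk8 1 0 1 0 0 0 0 1) _ (by rw [det_mk8]; ring) g_ue2
      rw [mul_mk8]
      exact main8 _ _ _ _ _ _ _ _ (by linear_combination hdet) (by simpa [ha] using hy)
    · apply shift_mem (mk8 1 0 0 1 0 0 0 1) _ (by rw [det_mk8]; ring) g_ue3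
      rw [mul_mk8]
      exact main8 _ _ _ _ _ _ _ _ (by linear_combination hdet) (by simpa [ha] using hy)
  · exact main8 _ _ _ _ _ _ _ _ hdet ha

end Chain

/-- Over a prime field, the simple Moufang loop is generated by the six
elements `u(eᵢ)`, `s(eᵢ)`, `1 ≤ i ≤ 3`. -/
theorem generated_by_six (p : ℕ) [Fact p.Prime] (M : Zorn (ZMod p))
    (hM : M.det = 1) :
    Zorn.InSubloop ({Zorn.u e1, Zorn.u e2, Zorn.u e3,
      Zorn.s e1, Zorn.s e2, Zorn.s e3} : Set (Zorn (ZMod p))) M ∨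
    Zorn.InSubloop ({Zorn.u e1, Zorn.u e2, Zorn.u e3,
      Zorn.s e1, Zorn.s e2, Zorn.s e3} : Set (Zorn (ZMod p))) M.neg := by
  left
  show Zorn.InSubloop (gset (ZMod p)) M
  exact mem_main M hM
end

section
/- Let F be a field and let α, β ∈ F³ be nonzero vectors with t(α) = t(β). Then s(β) = s(α) * l(−(α×β)) and s(β)' = s(α)' * u(α×β). -/
open Matrix

lemma dot_t_self {F : Type*} [Field F] {α : Fin 3 → F} (hα : α ≠ 0) :
    Zorn.t α ⬝ᵥ α = -1 := by
  unfold Zorn.t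
  split_ifs with h0 h1
  · simp [dotProduct, Fin.sum_univ_three]
    field_simp
  · push_neg at h0
    simp [dotProduct, Fin.sum_univ_three, h0]
    field_simp
  · push_neg at h0 h1
    have h2 : α 2 ≠ 0 := by
      intro h2; apply hα; funext i; fin_cases i <;> simp [h0, h1, h2]
    simp [dotProduct, Fin.sum_univ_three, h0, h1]
    field_simp

lemma cross_eq {F : Type*} [Field F] (α β : Fin 3 → F) :
    crossProduct α β = ![α 1 * β 2 - α 2 * β 1, α 2 * β 0 - α 0 * β 2,
      α 0 * β 1 - α 1 * β 0] := by
  funext i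
  fin_cases i <;> simp [crossProduct, Matrix.vecHead, Matrix.vecTail]

/-- If `t(α)` then `s(β) = s(α)·l(−α×β)` and `s(β)' = s(α)'·u(α×β)`. -/
theorem s_of_same_t (F : Type*) [Field F] (α β : Fin 3 → F)
    (hα : α ≠ 0) (hβ : β ≠ 0) (h : Zorn.t α = Zorn.t β) :
    Zorn.s β = (Zorn.s α).mul (Zorn.l (-(crossProduct α β))) ∧
    (Zorn.s β).transpose = (Zorn.s α).transpose.mul (Zorn.u (crossProduct α β)) := by
  have h1 : Zorn.t α ⬝ᵥ α = -1 := dot_t_self hα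
  have h2 : Zorn.t α ⬝ᵥ β = -1 := by rw [h]; exact dot_t_self hβ
  simp only [dotProduct, Fin.sum_univ_three] at h1 h2
  constructor <;>
    simp only [Zorn.s, Zorn.mul, Zorn.l, Zorn.u, Zorn.transpose, Zorn.mk.injEq] <;>
    refine ⟨?_, ?_, ?_, ?_⟩
  · simp [cross_eq, dotProduct, Fin.sum_univ_three]; ring
  · funext i
    fin_cases i
    · simp [cross_eq]; linear_combination β 0 * h1 - α 0 * h2
    · simp [cross_eq]; linear_combination β 1 * h1 - α 1 * h2
    · simp [cross_eq]; linear_combination β 2 * h1 - α 2 * h2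
  · funext i
    fin_cases i <;> simp [cross_eq, ← h]
  · simp [dotProduct, Fin.sum_univ_three]
  · simp [dotProduct, Fin.sum_univ_three]
  · funext i
    fin_cases i <;> simp [cross_eq, ← h]
  · funext i
    fin_cases i
    · simp [cross_eq]; linear_combination β 0 * h1 - α 0 * h2
    · simp [cross_eq]; linear_combination β 1 * h1 - α 1 * h2
    · simp [cross_eq]; linear_combination β 2 * h1 - α 2 * h2
  · simp [cross_eq, dotProduct, Fin.sum_univ_three]; ring
end

section
/- Let F be a field and let α ∈ F³ be nonzero. Then l(α) = (s(α)' * u(t(α))) * (−s(α)') and u(α) = (s(α) * l(t(α))) * (−s(α)). (Here −s(α)' = (s(α)')⁻¹ and −s(α) = s(α)⁻¹, so by diassociativity the parenthesization is immaterial.) -/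
open Matrix

/-- `l(α) = (s(α)'·u(t(α)))·(−s(α)')` and `u(α) = (s(α)·l(t(α)))·(−s(α))`. -/
theorem l_u_conjugation (F : Type*) [Field F] (α : Fin 3 → F) (hα : α ≠ 0) :
    Zorn.l α = ((Zorn.s α).transpose.mul (Zorn.u (Zorn.t α))).mul
      ((Zorn.s α).transpose.neg) ∧
    Zorn.u α = ((Zorn.s α).mul (Zorn.l (Zorn.t α))).mul ((Zorn.s α).neg) := by
  classical
  have hdot : α ⬝ᵥ Zorn.t α = -1 := by
    unfold Zorn.t
    by_cases h0 : α 0 ≠ 0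
    · simp [h0, dotProduct, Fin.sum_univ_three, mul_inv_cancel₀ h0]
    · by_cases h1 : α 1 ≠ 0
      · simp [h0, h1, dotProduct, Fin.sum_univ_three, mul_inv_cancel₀ h1]
      · have h2 : α 2 ≠ 0 := by
          intro h2
          apply hα
          push_neg at h0 h1
          funext i; fin_cases i <;> simp [h0, h1, h2]
        simp [h0, h1, dotProduct, Fin.sum_univ_three, mul_inv_cancel₀ h2]
  have hdot' : Zorn.t α ⬝ᵥ α = -1 := by rw [dotProduct_comm]; exact hdot
  have hc := cross_self α
  have hc' := cross_self (Zorn.t α)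
  constructor
  · simp only [Zorn.mul, Zorn.s, Zorn.transpose, Zorn.u, Zorn.neg, Zorn.l, Zorn.mk.injEq]
    simp [hc, hc', hdot, hdot', dotProduct_zero, zero_dotProduct,
      dotProduct_neg, neg_dotProduct, map_neg]
  · simp only [Zorn.mul, Zorn.s, Zorn.u, Zorn.neg, Zorn.l, Zorn.mk.injEq]
    simp [hc, hc', hdot, hdot', dotProduct_zero, zero_dotProduct,
      dotProduct_neg, neg_dotProduct, map_neg]
end

section
/- Let F be a field. Then s(e₂) = ((u(e₁)*u(e₃)) * (u(e₂)*u(e₁))) * (u(−e₃) * (u(e₂)*s(e₃))), where u(−e₃) = u(e₃)⁻¹, s(eᵢ) = (0, eᵢ, −eᵢ, 0), and u(α) = (1, α, 0, 1). -/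
open Matrix

/-- `s(e₂) = [u(e₁)u(e₃)·u(e₂)u(e₁)][u(e₃)⁻¹·u(e₂)s(e₃)]`. -/
theorem s_e2_eq (F : Type*) [Field F] :
    (⟨0, e2, -e2, 0⟩ : Zorn F) =
      (((Zorn.u e1).mul (Zorn.u e3)).mul ((Zorn.u e2).mul (Zorn.u e1))).mul
        ((Zorn.u (-e3)).mul ((Zorn.u e2).mul ⟨0, e3, -e3, 0⟩)) := by
  simp only [Zorn.mul, Zorn.u, e1, e2, e3, Zorn.mk.injEq]
  refine ⟨?_, ?_, ?_, ?_⟩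
  · simp [cross_apply, dotProduct, Fin.sum_univ_three]
  · funext i; fin_cases i <;> simp [cross_apply, dotProduct, Fin.sum_univ_three]
  · funext i; fin_cases i <;> simp [cross_apply, dotProduct, Fin.sum_univ_three]
  · simp [cross_apply, dotProduct, Fin.sum_univ_three]
end

section
/- Let F be a field and let x = (0, e₃, −e₃, 1). Then s(e₃) = (((u(e₂)*u(e₁)) * x) * (x * u(e₁))) * ((x² * u(e₂)) * ((u(e₁) * x²) * u(e₁))), where x² = x*x, u(α) = (1, α, 0, 1), and s(e₃) = (0, e₃, −e₃, 0). -/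
open Matrix

/-- `s(e₃) = [u(e₂)u(e₁)·x][xu(e₁)]·[x²u(e₂)·u(e₁)x²u(e₁)]` where
`x = (0, e₃, −e₃, 1)`. -/
theorem s_e3_eq (F : Type*) [Field F] :
    (⟨0, e3, -e3, 0⟩ : Zorn F) =
      ((((Zorn.u e2).mul (Zorn.u e1)).mul (⟨0, e3, -e3, 1⟩ : Zorn F)).mul
        ((⟨0, e3, -e3, 1⟩ : Zorn F).mul (Zorn.u e1))).mul
      ((((⟨0, e3, -e3, 1⟩ : Zorn F).mul ⟨0, e3, -e3, 1⟩).mul (Zorn.u e2)).mul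
        (((Zorn.u e1).mul ((⟨0, e3, -e3, 1⟩ : Zorn F).mul ⟨0, e3, -e3, 1⟩)).mul
          (Zorn.u e1))) := by
  have hA : (Zorn.u e2).mul (Zorn.u (e1 : Fin 3 → F)) = ⟨1, ![1,1,0], ![0,0,-1], 1⟩ := by
    simp [Zorn.mul, Zorn.u, e1, e2, crossProduct, dotProduct, Fin.sum_univ_three,
      funext_iff, Fin.forall_fin_succ]
  have hB : (⟨1, ![1,1,0], ![0,0,-1], 1⟩ : Zorn F).mul ⟨0, e3, -e3, 1⟩ =
      ⟨0, ![1,1,1], ![1,-1,-1], 0⟩ := by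
    simp [Zorn.mul, e3, crossProduct, dotProduct, Fin.sum_univ_three,
      funext_iff, Fin.forall_fin_succ]
  have hC : (⟨0, e3, -e3, 1⟩ : Zorn F).mul (Zorn.u e1) = ⟨0, ![0,0,1], ![0,1,-1], 1⟩ := by
    simp [Zorn.mul, Zorn.u, e1, e3, crossProduct, dotProduct, Fin.sum_univ_three,
      funext_iff, Fin.forall_fin_succ]
  have hL : (⟨0, ![1,1,1], ![1,-1,-1], 0⟩ : Zorn F).mul ⟨0, ![0,0,1], ![0,1,-1], 1⟩ =
      ⟨0, ![-1,0,0], ![1,-1,0], -1⟩ := by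
    simp [Zorn.mul, crossProduct, dotProduct, Fin.sum_univ_three,
      funext_iff, Fin.forall_fin_succ]
  have hD : (⟨0, e3, -e3, 1⟩ : Zorn F).mul ⟨0, e3, -e3, 1⟩ = ⟨-1, ![0,0,1], ![0,0,-1], 0⟩ := by
    simp [Zorn.mul, e3, crossProduct, dotProduct, Fin.sum_univ_three,
      funext_iff, Fin.forall_fin_succ]
  have hE : (⟨-1, ![0,0,1], ![0,0,-1], 0⟩ : Zorn F).mul (Zorn.u e2) =
      ⟨-1, ![0,-1,1], ![-1,0,-1], 0⟩ := by
    simp [Zorn.mul, Zorn.u, e2, crossProduct, dotProduct, Fin.sum_univ_three,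
      funext_iff, Fin.forall_fin_succ]
  have hG : (Zorn.u e1).mul (⟨-1, ![0,0,1], ![0,0,-1], 0⟩ : Zorn F) =
      ⟨-1, ![0,0,1], ![0,-1,-1], 0⟩ := by
    simp [Zorn.mul, Zorn.u, e1, crossProduct, dotProduct, Fin.sum_univ_three,
      funext_iff, Fin.forall_fin_succ]
  have hH : (⟨-1, ![0,0,1], ![0,-1,-1], 0⟩ : Zorn F).mul (Zorn.u e1) =
      ⟨-1, ![-1,0,1], ![0,0,-1], 0⟩ := by
    simp [Zorn.mul, Zorn.u, e1, crossProduct, dotProduct, Fin.sum_univ_three,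
      funext_iff, Fin.forall_fin_succ]
  have hR : (⟨-1, ![0,-1,1], ![-1,0,-1], 0⟩ : Zorn F).mul ⟨-1, ![-1,0,1], ![0,0,-1], 0⟩ =
      ⟨0, ![1,1,-1], ![0,-1,0], 0⟩ := by
    simp [Zorn.mul, crossProduct, dotProduct, Fin.sum_univ_three,
      funext_iff, Fin.forall_fin_succ]
  rw [hA, hB, hC, hL, hD, hE, hG, hH, hR]
  simp [Zorn.mul, e3, crossProduct, dotProduct, Fin.sum_univ_three,
    funext_iff, Fin.forall_fin_succ]
end

section
/- Let F be a field. For all Zorn vector matrices M and N over F, det(M * N) = det(M) · det(N). In particular, the Zorn vector matrices of determinant 1 are closed under multiplication. -/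
open Matrix

/-- The determinant of Zorn vector matrices is multiplicative. -/
theorem det_mul (F : Type*) [Field F] (M N : Zorn F) :
    (M.mul N).det = M.det * N.det := by
  simp only [Zorn.mul, Zorn.det, crossProduct, dotProduct, Fin.sum_univ_three,
    Pi.add_apply, Pi.sub_apply, Pi.smul_apply, smul_eq_mul, LinearMap.mk₂_apply,
    Matrix.cons_val_zero, Matrix.cons_val_one, Matrix.head_cons,
    Matrix.cons_val_two, Matrix.tail_cons]
  ring
end

section
/- Let F be a field. The Zorn vector matrix multiplication satisfies the left Moufang identity: for all Zorn vector matrices X, Y, Z over F, ((X * Y) * X) * Z = X * (Y * (X * Z)). -/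
open Matrix

set_option maxHeartbeats 4000000 in
/-- Zorn vector matrix multiplication satisfies the left Moufang identity. -/
theorem left_moufang (F : Type*) [Field F] (X Y Z : Zorn F) :
    (((X.mul Y).mul X).mul Z) = X.mul (Y.mul (X.mul Z)) := by
  obtain ⟨a1,α1,β1,b1⟩ := X
  obtain ⟨a2,α2,β2,b2⟩ := Y
  obtain ⟨a3,α3,β3,b3⟩ := Z
  simp only [Zorn.mul, Zorn.mk.injEq, cross_apply, dotProduct, Fin.sum_univ_three,
    Pi.add_apply, Pi.sub_apply, Pi.smul_apply, smul_eq_mul, Matrix.cons_val_zero,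
    Matrix.cons_val_one, Matrix.head_cons, Matrix.cons_val_two, Matrix.tail_cons]
  refine ⟨by ring, funext fun i => ?_, funext fun i => ?_, by ring⟩ <;>
    fin_cases i <;>
    simp only [Pi.add_apply, Pi.sub_apply, Pi.smul_apply, smul_eq_mul, Fin.isValue,
      Matrix.cons_val_zero, Matrix.cons_val_one, Matrix.head_cons, Matrix.cons_val_two,
      Matrix.tail_cons, Fin.zero_eta, Fin.mk_one, Fin.reduceFinMk] <;> ring
end

section
/- Let F be a field. For all a ∈ F: s((1, a, 0)) = s(e₁) * l(−a·e₃), s((0, 1, a)) = s(e₂) * l(−a·e₁), s((1, a, 0))' = s(e₁)' * u(a·e₃), and s((0, 1, a))' = s(e₂)' * u(a·e₁). (Over a prime field these say s(1,a,0) = s(e₁)l(e₃)⁻ᵃ, s(0,1,a) = s(e₂)l(e₁)⁻ᵃ, s(1,a,0)' = s(e₁)'u(e₃)ᵃ, and s(0,1,a)' = s(e₂)'u(e₁)ᵃ.) -/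
open Matrix

/-- `s(1,a,0) = s(e₁)·l(−a·e₃)`, `s(0,1,a) = s(e₂)·l(−a·e₁)`,
`s(1,a,0)' = s(e₁)'·u(a·e₃)`, and `s(0,1,a)' = s(e₂)'·u(a·e₁)`. -/
theorem s_row_formulas (F : Type*) [Field F] (a : F) :
    Zorn.s ![1, a, 0] = (Zorn.s e1).mul (Zorn.l (-(a • e3))) ∧
    Zorn.s ![0, 1, a] = (Zorn.s e2).mul (Zorn.l (-(a • e1))) ∧
    (Zorn.s ![1, a, 0]).transpose = (Zorn.s e1).transpose.mul (Zorn.u (a • e3)) ∧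
    (Zorn.s ![0, 1, a]).transpose = (Zorn.s e2).transpose.mul (Zorn.u (a • e1)) := by
  have h0 : (1:F) ≠ 0 := one_ne_zero
  refine ⟨?_, ?_, ?_, ?_⟩ <;>
  · simp only [Zorn.s, Zorn.t, Zorn.mul, Zorn.l, Zorn.u, Zorn.transpose, e1, e2, e3,
      Matrix.cons_val_zero, Matrix.cons_val_one, Matrix.head_cons, ne_eq, h0,
      not_true_eq_false, not_false_eq_true, if_true, if_false, ite_not]
    simp only [Zorn.mk.injEq, funext_iff, Fin.forall_fin_succ, Fin.forall_fin_zero_pi]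
    norm_num [crossProduct, dotProduct, Fin.sum_univ_three, Matrix.cons_val_two, Matrix.tail_cons, Matrix.head_cons]
end
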